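/- arXiv:1506.02529 — 2 statements merged into one kernel-verified Lean document; each statement's English description precedes it below -/
import Mathlib

section
/- Let G be a locally compact, second-countable Hausdorff unimodular topological group with (two-sided invariant) Haar measure μ of full support, let H ⊆ G be a subgroup, and let K : G × G → ℝ be continuous. Suppose that for every continuous compactly supported U : G → ℝ, every g ∈ G and every h, h' ∈ H one has ∫_G K(g,q) U(qh) dμ(q) = ∫_G K(g,q) U(q) dμ(q) and ∫_G K(gh',q) U(q) dμ(q) = ∫_G K(g,q) U(q) dμ(q). Then K(g h', q h) = K(g, q) for all g, q ∈ G and all h, h' ∈ H. -/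
open MeasureTheory Set

section FundamentalLemma

variable {X : Type*} [TopologicalSpace X] [RegularSpace X] [LocallyCompactSpace X]
  [MeasurableSpace X] [OpensMeasurableSpace X]
  {μ : Measure X} [IsFiniteMeasureOnCompacts μ] [μ.IsOpenPosMeasure]

theorem Continuous.eq_zero_of_forall_integral_mul_eq_zero {f : X → ℝ} (hf : Continuous f)
    (h : ∀ U : X → ℝ, Continuous U → HasCompactSupport U → ∫ x, f x * U x ∂μ = 0) :
    f = 0 := by
  funext x
  by_contra hx
  -- Test against a bump at `x` supported where `f` has the sign of `f x`.
  let V : Set X := {y | 0 < f x * f y}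
  have hV : IsOpen V := isOpen_lt continuous_const (continuous_const.mul hf)
  have hxV : x ∈ V := mul_self_pos.mpr hx
  obtain ⟨U, hUx, hUV, hUc, hU01⟩ := exists_continuous_one_zero_of_isCompact
    isCompact_singleton hV.isClosed_compl (disjoint_compl_right_iff_subset.mpr
      (singleton_subset_iff.mpr hxV))
  have hnonneg : 0 ≤ fun y => f x * (f y * U y) := by
    intro y
    change 0 ≤ f x * (f y * U y)
    by_cases hy : y ∈ V
    · rw [← mul_assoc]
      exact mul_nonneg (le_of_lt hy) (hU01 y).1
    · simp [hUV hy]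
  have hpos : 0 < ∫ y, f x * (f y * U y) ∂μ :=
    (continuous_const.mul (hf.mul U.continuous)).integral_pos_of_hasCompactSupport_nonneg_nonzero
      hUc.mul_left.mul_left hnonneg (x := x) (by simpa [hUx rfl] using mul_self_ne_zero.mpr hx)
  rw [integral_const_mul, h U U.continuous hUc, mul_zero] at hpos
  exact hpos.false

theorem Continuous.eq_of_forall_integral_mul_eq {f₁ f₂ : X → ℝ}
    (hf₁ : Continuous f₁) (hf₂ : Continuous f₂)
    (h : ∀ U : X → ℝ, Continuous U → HasCompactSupport U →
      ∫ x, f₁ x * U x ∂μ = ∫ x, f₂ x * U x ∂μ) :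
    f₁ = f₂ := by
  refine sub_eq_zero.mp
    ((hf₁.sub hf₂).eq_zero_of_forall_integral_mul_eq_zero (μ := μ) fun U hU hUc => ?_)
  have hint : ∀ f : X → ℝ, Continuous f → Integrable (fun x => f x * U x) μ := fun f hf =>
    (hf.mul hU).integrable_of_hasCompactSupport hUc.mul_left
  simp only [Pi.sub_apply, sub_mul]
  rw [integral_sub (hint f₁ hf₁) (hint f₂ hf₂), h U hU hUc, sub_self]

end FundamentalLemma

theorem kernel_right_H_invariant_general
    {G : Type*} [Group G] [TopologicalSpace G] [IsTopologicalGroup G]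
    [LocallyCompactSpace G]
    [MeasurableSpace G] [BorelSpace G]
    (μ : Measure G) [μ.IsHaarMeasure] [μ.IsMulRightInvariant]
    (H : Subgroup G)
    (K : G × G → ℝ) (hK : Continuous K)
    (h1 : ∀ U : G → ℝ, Continuous U → HasCompactSupport U → ∀ g : G, ∀ h ∈ H,
      ∫ q, K (g, q) * U (q * h) ∂μ = ∫ q, K (g, q) * U q ∂μ)
    (h2 : ∀ U : G → ℝ, Continuous U → HasCompactSupport U → ∀ g : G, ∀ h' ∈ H,
      ∫ q, K (g * h', q) * U q ∂μ = ∫ q, K (g, q) * U q ∂μ) :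
    ∀ g q : G, ∀ h ∈ H, ∀ h' ∈ H, K (g * h', q * h) = K (g, q) := by
  have hKg : ∀ g, Continuous fun q => K (g, q) := fun g => hK.comp (Continuous.prodMk_right g)
  have hsecond : ∀ g, ∀ h ∈ H, (fun q => K (g, q * h)) = fun q => K (g, q) := by
    intro g h hh
    refine Continuous.eq_of_forall_integral_mul_eq (μ := μ)
      ((hKg g).comp (continuous_mul_const h)) (hKg g) fun U hU hUc => ?_
    -- Right invariance of `μ` moves the translation by `h` from `K` onto `U`.
    rw [← h1 U hU hUc g h⁻¹ (H.inv_mem hh),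
      ← integral_mul_right_eq_self (fun q => K (g, q) * U (q * h⁻¹)) h]
    simp only [mul_inv_cancel_right]
  have hfirst : ∀ g, ∀ h' ∈ H, (fun q => K (g * h', q)) = fun q => K (g, q) := fun g h' hh' =>
    Continuous.eq_of_forall_integral_mul_eq (hKg (g * h')) (hKg g) fun U hU hUc =>
      h2 U hU hUc g h' hh'
  intro g q h hh h' hh'
  rw [congrFun (hfirst g h' hh') (q * h), congrFun (hsecond g h hh) q]

/-- On a unimodular locally compact second-countable group, a continuous kernel
whose integral operator is invariant under the right-regular actions of a subgroup `H` (in the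
sense of the two displayed identities) is itself right-`H`-invariant in both entries:
`K (g * h', q * h) = K (g, q)`. -/
theorem kernel_right_H_invariant
    {G : Type*} [Group G] [TopologicalSpace G] [IsTopologicalGroup G]
    [LocallyCompactSpace G] [SecondCountableTopology G] [T2Space G]
    [MeasurableSpace G] [BorelSpace G]
    (μ : Measure G) [μ.IsHaarMeasure] [μ.IsMulRightInvariant]
    (H : Subgroup G)
    (K : G × G → ℝ) (hK : Continuous K)
    (h1 : ∀ U : G → ℝ, Continuous U → HasCompactSupport U → ∀ g : G, ∀ h ∈ H,
      ∫ q, K (g, q) * U (q * h) ∂μ = ∫ q, K (g, q) * U q ∂μ)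
    (h2 : ∀ U : G → ℝ, Continuous U → HasCompactSupport U → ∀ g : G, ∀ h' ∈ H,
      ∫ q, K (g * h', q) * U q ∂μ = ∫ q, K (g, q) * U q ∂μ) :
    ∀ g q : G, ∀ h ∈ H, ∀ h' ∈ H, K (g * h', q * h) = K (g, q) :=
  kernel_right_H_invariant_general μ H K hK h1 h2
end

section
/- For every c ∈ ℝ³ with 0 < ‖c‖ < 2π and every x ∈ ℝ³, one has F(−c, −exp(skew(c))ᵀ x) = −F(c, x), where exp denotes the 3×3 matrix exponential. (This expresses that the logarithm coefficients of the inverse group element g⁻¹ = (−R⁻¹x, R⁻¹), R = exp(skew(c)), are the negatives of those of g = (x, R).) -/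
/-!
Write `S = skew c` and `q = ‖c‖`. Since `S³ = -q² S`, every power series in `S` collapses to
the span of `1, S, S²`, and the matrix of `F c` is `M(S) = 1 - S/2 + cotCoeff q • S²`, the
value at `S` of `z / (eᶻ - 1)` (compare both at the eigenvalues `0, ±iq` of `S`). As
`(exp S)ᵀ = exp (-S)`, the claim is `M(-S) exp (-S) = M(S)`, i.e. the identity
`z / (eᶻ - 1) · eᶻ = -z / (e⁻ᶻ - 1)`. In the span of `1, S, S²`, with Rodrigues' formula for
`exp`, it becomes two half-angle identities.
-/

open Matrix
open scoped Nat

/-- The skew-symmetric matrix associated to a vector `c ∈ ℝ³`. -/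
def skew (c : Fin 3 → ℝ) : Matrix (Fin 3) (Fin 3) ℝ :=
  !![0, -c 2, c 1; c 2, 0, -c 0; -c 1, c 0, 0]

/-- The Euclidean norm of a vector in `ℝ³`. -/
noncomputable def enorm3 (c : Fin 3 → ℝ) : ℝ :=
  Real.sqrt (c 0 ^ 2 + c 1 ^ 2 + c 2 ^ 2)

/-- Equation (11) of the paper: the spatial coefficients of the logarithm on `SE(3)`,
`F(c,x) = (I − (1/2)·skew c + q⁻²·(1 − (q/2)·cot(q/2))·(skew c)²) x` with `q = ‖c‖`. -/
noncomputable def F (c x : Fin 3 → ℝ) : Fin 3 → ℝ :=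
  ((1 : Matrix (Fin 3) (Fin 3) ℝ) - (1 / 2 : ℝ) • skew c +
      ((enorm3 c)⁻¹ ^ 2 *
        (1 - enorm3 c / 2 * (Real.cos (enorm3 c / 2) / Real.sin (enorm3 c / 2)))) •
        (skew c * skew c)).mulVec x

noncomputable def cotCoeff (q : ℝ) : ℝ :=
  q⁻¹ ^ 2 * (1 - q / 2 * (Real.cos (q / 2) / Real.sin (q / 2)))

section PowThree

variable {A : Type*} [Ring A] [Algebra ℝ A] {a : A}

theorem pow_two_mul_add_one_of_pow_three {t : ℝ} (ha : a ^ 3 = -t • a) (k : ℕ) :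
    a ^ (2 * k + 1) = (-t) ^ k • a := by
  induction k with
  | zero => simp
  | succ k ih =>
    rw [show 2 * (k + 1) + 1 = 2 * k + 1 + 2 by ring, pow_add, ih, smul_mul_assoc, ← pow_succ',
      ha, smul_smul, pow_succ]

theorem mul_quadratic_of_pow_three {t : ℝ} (ha : a ^ 3 = -t • a) (u v u' v' : ℝ) :
    (1 + u • a + v • (a * a)) * (1 + u' • a + v' • (a * a)) =
      1 + (u + u' - t * (u * v' + v * u')) • a + (v + v' + u * u' - t * (v * v')) • (a * a) := by
  have h3 : a * a * a = -t • a := by rw [← pow_three', ha]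
  have h3' : a * (a * a) = -t • a := by rw [← mul_assoc, h3]
  have h4 : a * a * (a * a) = -t • (a * a) := by rw [← mul_assoc, h3, smul_mul_assoc]
  simp only [mul_add, add_mul, one_mul, mul_one, smul_mul_assoc, mul_smul_comm, smul_smul,
    h3, h3', h4]
  module

variable [TopologicalSpace A] [IsTopologicalRing A] [ContinuousSMul ℝ A] [T2Space A] {q : ℝ}

/-- Rodrigues' formula. -/
theorem exp_eq_of_pow_three (hq : q ≠ 0) (ha : a ^ 3 = -q ^ 2 • a) :
    NormedSpace.exp a = 1 + (Real.sin q / q) • a + ((1 - Real.cos q) / q ^ 2) • (a * a) := by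
  have hodd := pow_two_mul_add_one_of_pow_three ha
  have hsin : HasSum (fun k : ℕ => ((2 * k + 1)! : ℝ)⁻¹ • a ^ (2 * k + 1))
      ((Real.sin q / q) • a) := by
    refine (((Real.hasSum_sin q).div_const q).smul_const a).congr_fun fun k => ?_
    rw [hodd, smul_smul]
    refine congrArg (· • a) ?_
    field_simp
    ring
  have hcos : HasSum (fun k : ℕ => ((2 * k + 2)! : ℝ)⁻¹ • a ^ (2 * k + 2))
      (((1 - Real.cos q) / q ^ 2) • (a * a)) := by
    have h : HasSum (fun k : ℕ => -((-1) ^ (k + 1) * q ^ (2 * (k + 1)) / (2 * (k + 1))!))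
        (1 - Real.cos q) := by
      have h := (Real.hasSum_cos q).neg
      rw [← hasSum_nat_add_iff' 1] at h
      simpa [sub_eq_add_neg, add_comm] using h
    refine ((h.div_const (q ^ 2)).smul_const (a * a)).congr_fun fun k => ?_
    rw [pow_succ, hodd, smul_mul_assoc, smul_smul]
    refine congrArg (· • (a * a)) ?_
    rw [show 2 * (k + 1) = 2 * k + 2 by ring]
    field_simp
    ring
  have hsum : HasSum (fun n : ℕ => ((n + 1)! : ℝ)⁻¹ • a ^ (n + 1))
      ((Real.sin q / q) • a + ((1 - Real.cos q) / q ^ 2) • (a * a)) := by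
    refine hsin.even_add_odd ?_
    simpa [pow_succ, mul_assoc] using hcos
  rw [NormedSpace.exp_eq_tsum ℝ]
  refine HasSum.tsum_eq ?_
  rw [← hasSum_nat_add_iff' 1]
  simpa only [Finset.sum_range_one, Nat.factorial_zero, Nat.cast_one, inv_one, pow_zero,
    one_smul, add_assoc, add_sub_cancel_left] using hsum

theorem cotMatrix_mul_exp_of_pow_three (hq : q ≠ 0) (hs : Real.sin (q / 2) ≠ 0)
    (ha : a ^ 3 = -q ^ 2 • a) :
    (1 - (1 / 2 : ℝ) • a + cotCoeff q • (a * a)) * NormedSpace.exp a =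
      1 + (1 / 2 : ℝ) • a + cotCoeff q • (a * a) := by
  have hsin : Real.sin q = 2 * Real.sin (q / 2) * Real.cos (q / 2) := by
    rw [← Real.sin_two_mul, mul_div_cancel₀ q two_ne_zero]
  have hcos : Real.cos q = Real.cos (q / 2) ^ 2 - Real.sin (q / 2) ^ 2 := by
    rw [← Real.cos_two_mul', mul_div_cancel₀ q two_ne_zero]
  have hpyth := Real.sin_sq_add_cos_sq (q / 2)
  have hcoeff_a : -(1 / 2) + Real.sin q / q - q ^ 2 *
      (-(1 / 2) * ((1 - Real.cos q) / q ^ 2) + cotCoeff q * (Real.sin q / q)) = 1 / 2 := by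
    rw [cotCoeff, hsin, hcos]
    field_simp
    linear_combination q * hpyth
  have hcoeff_sq : cotCoeff q + (1 - Real.cos q) / q ^ 2 + -(1 / 2) * (Real.sin q / q) -
      q ^ 2 * (cotCoeff q * ((1 - Real.cos q) / q ^ 2)) = cotCoeff q := by
    rw [cotCoeff, hsin, hcos]
    field_simp
    linear_combination -q * Real.cos (q / 2) * hpyth
  rw [exp_eq_of_pow_three hq ha, sub_eq_add_neg, ← neg_smul, mul_quadratic_of_pow_three ha,
    hcoeff_a, hcoeff_sq]

end PowThree

theorem F_eq_mulVec (c x : Fin 3 → ℝ) :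
    F c x = (1 - (1 / 2 : ℝ) • skew c + cotCoeff (enorm3 c) • (skew c * skew c)) *ᵥ x :=
  rfl

theorem skew_neg (c : Fin 3 → ℝ) : skew (-c) = -skew c := by
  ext i j
  fin_cases i <;> fin_cases j <;> simp [skew]

theorem transpose_skew (c : Fin 3 → ℝ) : (skew c)ᵀ = skew (-c) := by
  ext i j
  fin_cases i <;> fin_cases j <;> simp [skew]

theorem enorm3_neg (c : Fin 3 → ℝ) : enorm3 (-c) = enorm3 c := by
  simp [enorm3]

theorem skew_pow_three (c : Fin 3 → ℝ) : skew c ^ 3 = -enorm3 c ^ 2 • skew c := by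
  rw [enorm3, Real.sq_sqrt (by positivity)]
  ext i j
  fin_cases i <;> fin_cases j <;>
    simp [skew, pow_three, Matrix.mul_apply, Fin.sum_univ_succ] <;> ring

/-- The logarithm coefficients of the inverse group element are the negatives
of those of the element: `F(−c, −(exp (skew c))ᵀ x) = −F(c, x)` for `0 < ‖c‖ < 2π`. -/
theorem F_inverse_element (c : Fin 3 → ℝ) (hc0 : 0 < enorm3 c)
    (hc2 : enorm3 c < 2 * Real.pi) (x : Fin 3 → ℝ) :
    F (-c) (-(NormedSpace.exp (skew c))ᵀ.mulVec x) = -F c x := by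
  have hs : Real.sin (enorm3 c / 2) ≠ 0 :=
    (Real.sin_pos_of_pos_of_lt_pi (by linarith) (by linarith)).ne'
  have key := cotMatrix_mul_exp_of_pow_three hc0.ne' hs (enorm3_neg c ▸ skew_pow_three (-c))
  rw [← Matrix.exp_transpose, transpose_skew, F_eq_mulVec, F_eq_mulVec, enorm3_neg, mulVec_neg,
    mulVec_mulVec, key, skew_neg, neg_mul_neg, smul_neg, ← sub_eq_add_neg]
end
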